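/- For each integer ℓ ≥ 2 let n_ℓ := ℓ·⌈(ln ℓ)²⌉ + 1, θ_ℓ := π/(2(n_ℓ−1)), α := ∑_{m=2}^∞ 1/(m (ln m)²), and δ_ℓ := 1/(α·ℓ·(ln ℓ)²). Then for every ℓ ≥ 2 and every 0 ≤ j ≤ n_ℓ−2, one has 0 ≤ δ_ℓ·cot((j+1)θ_ℓ) ≤ 1; equivalently, z_{ℓ,j} := 1 − δ_ℓ·cot((j+1)θ_ℓ) lies in [0,1]. -/

import Mathlib

/-!
Since `x cos x < sin x` on `(0, π/2)`, we have `cot x ≤ 1/x` on `(0, π/2]`, so with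
`x = (j+1)θ_ℓ ≥ θ_ℓ` it suffices to show `δ_ℓ ≤ θ_ℓ`, i.e. `2⌈(ln ℓ)²⌉ ≤ π α (ln ℓ)²`.
For `ℓ ≥ 3` the ceiling is at most `2(ln ℓ)²`, and for `ℓ = 2` it is `1`; in both cases
`⌈(ln ℓ)²⌉ (ln 2)² ≤ (ln ℓ)²`. The series defining `α` converges by Cauchy condensation, and its
terms `m = 2, 3, 4` give `α (ln 2)² ≥ 1/2 + 1/12 + 1/16 = 31/48 > 2/π`.
-/

open scoped BigOperators ENNReal NNReal

noncomputable section

namespace Stmt12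

/-- `n_ℓ := ℓ·⌈(ln ℓ)²⌉ + 1`. -/
def nl (l : ℕ) : ℕ := l * ⌈(Real.log l) ^ 2⌉₊ + 1

/-- `θ_ℓ := π / (2(n_ℓ − 1))`. -/
def θ (l : ℕ) : ℝ := Real.pi / (2 * ((nl l : ℝ) - 1))

/-- `α := ∑_{m=2}^∞ 1/(m (ln m)²)`. -/
def α : ℝ := ∑' m : ℕ, if 2 ≤ m then 1 / (m * (Real.log m) ^ 2) else 0

/-- `δ_ℓ := 1/(α ℓ (ln ℓ)²)`. -/
def δ (l : ℕ) : ℝ := 1 / (α * l * (Real.log l) ^ 2)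

/-- `cot x := cos x / sin x`. -/
def cot (x : ℝ) : ℝ := Real.cos x / Real.sin x

open Real

theorem cot_nonneg {x : ℝ} (hx₀ : 0 < x) (hx : x ≤ π / 2) : 0 ≤ cot x :=
  div_nonneg (cos_nonneg_of_mem_Icc ⟨by linarith, hx⟩)
    (sin_pos_of_pos_of_lt_pi hx₀ (by linarith [pi_pos])).le

theorem cot_le_inv {x : ℝ} (hx₀ : 0 < x) (hx : x ≤ π / 2) : cot x ≤ x⁻¹ := by
  have hsin : 0 < sin x := sin_pos_of_pos_of_lt_pi hx₀ (by linarith [pi_pos])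
  rcases hx.lt_or_eq with hx | rfl
  · have hcos : 0 < cos x := cos_pos_of_mem_Ioo ⟨by linarith, hx⟩
    have htan : x * cos x < sin x := by
      simpa [tan_eq_sin_div_cos, lt_div_iff₀ hcos] using lt_tan hx₀ hx
    rw [cot, ← one_div, div_le_div_iff₀ hsin hx₀]
    linarith
  · rw [cot, cos_pi_div_two, zero_div]
    positivity

theorem mul_cot_le_one {d x : ℝ} (hd : 0 ≤ d) (hdx : d ≤ x) (hx₀ : 0 < x) (hx : x ≤ π / 2) :
    d * cot x ≤ 1 :=
  calc d * cot x ≤ d * x⁻¹ := mul_le_mul_of_nonneg_left (cot_le_inv hx₀ hx) hd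
    _ ≤ 1 := by rw [← div_eq_mul_inv]; exact div_le_one_of_le₀ hdx hx₀.le

theorem summable_one_div_nat_mul_log_sq :
    Summable fun m : ℕ => if 2 ≤ m then 1 / (m * log m ^ 2) else 0 := by
  refine (summable_condensed_iff_of_eventually_nonneg ?_ ?_).mp ?_
  · exact Filter.Eventually.of_forall fun m => by dsimp only; split_ifs <;> positivity
  · filter_upwards [Filter.eventually_ge_atTop 2] with m hm
    have hm' : (2 : ℝ) ≤ m := by exact_mod_cast hm
    rw [if_pos (by omega), if_pos hm]
    have hlog : 0 < log m := log_pos (by linarith)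
    push_cast
    gcongr <;> linarith
  · have hcondensed : ∀ k : ℕ,
        (2 : ℝ) ^ k * (if 2 ≤ 2 ^ k then 1 / ((2 ^ k : ℕ) * log (2 ^ k : ℕ) ^ 2) else 0) =
          (log 2 ^ 2)⁻¹ * (1 / (k : ℝ) ^ 2) := by
      intro k
      rcases k.eq_zero_or_pos with rfl | hk
      · simp
      · rw [if_pos (by simpa using Nat.pow_le_pow_right two_pos hk)]
        push_cast
        rw [log_pow]
        field_simp
    simp_rw [hcondensed]
    exact (summable_one_div_nat_pow.mpr one_lt_two).mul_left _

theorem α_nonneg : 0 ≤ α :=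
  tsum_nonneg fun m => by split_ifs <;> positivity

theorem α_mul_log_two_sq_ge : 31 / 48 ≤ α * log 2 ^ 2 := by
  have hL : 0 < log 2 := log_pos one_lt_two
  have hlog4 : log 4 = 2 * log 2 := by
    rw [show (4 : ℝ) = 2 ^ 2 by norm_num, log_pow]; norm_num
  have hpartial : 1 / (2 * log 2 ^ 2) + 1 / (3 * log 3 ^ 2) + 1 / (4 * log 4 ^ 2) ≤ α :=
    calc _ = ∑ m ∈ Finset.range 5, if 2 ≤ m then 1 / ((m : ℝ) * log m ^ 2) else 0 := by
          norm_num [Finset.sum_range_succ]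
      _ ≤ α := summable_one_div_nat_mul_log_sq.sum_le_tsum _ fun m _ => by
          split_ifs <;> positivity
  have hterm3 : 1 / (3 * log 4 ^ 2) ≤ 1 / (3 * log 3 ^ 2) := by
    have : 0 < log 3 := log_pos (by norm_num)
    gcongr
    norm_num
  calc (31 / 48 : ℝ)
      = (1 / (2 * log 2 ^ 2) + 1 / (3 * log 4 ^ 2) + 1 / (4 * log 4 ^ 2)) * log 2 ^ 2 := by
        rw [hlog4]; field_simp; ring
    _ ≤ α * log 2 ^ 2 := by gcongr; linarith

theorem δ_nonneg (l : ℕ) : 0 ≤ δ l := by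
  have := α_nonneg
  unfold δ
  positivity

theorem natCeil_log_sq_mul_log_two_sq_le {l : ℕ} (hl : 2 ≤ l) :
    (⌈log l ^ 2⌉₊ : ℝ) * log 2 ^ 2 ≤ log l ^ 2 := by
  have hL : log 2 < 0.7 := log_two_lt_d9.trans (by norm_num)
  have hL₀ : 0 < log 2 := log_pos one_lt_two
  rcases hl.eq_or_lt with rfl | hl
  · have : ⌈log 2 ^ 2⌉₊ = 1 := by
      rw [Nat.ceil_eq_iff one_ne_zero]
      exact ⟨by norm_num; positivity, by push_cast; nlinarith⟩
    simp [this]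
  · have hA : 1 ≤ log l := by
      rw [le_log_iff_exp_le (by positivity)]
      have : (3 : ℝ) ≤ l := by exact_mod_cast hl
      linarith [exp_one_lt_d9]
    have hC : (⌈log l ^ 2⌉₊ : ℝ) ≤ 2 * log l ^ 2 := by
      linarith [Nat.ceil_lt_add_one (sq_nonneg (log l)), one_le_pow₀ (n := 2) hA]
    calc (⌈log l ^ 2⌉₊ : ℝ) * log 2 ^ 2 ≤ 2 * log l ^ 2 * (1 / 2) := by
          gcongr; nlinarith
      _ = log l ^ 2 := by ring

theorem nl_sub_one (l : ℕ) : (nl l : ℝ) - 1 = l * ⌈log l ^ 2⌉₊ := by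
  simp [nl]

theorem two_le_nl {l : ℕ} (hl : 2 ≤ l) : 2 ≤ nl l := by
  have : 0 < ⌈log l ^ 2⌉₊ :=
    Nat.ceil_pos.mpr (pow_pos (log_pos (by exact_mod_cast hl)) 2)
  unfold nl
  nlinarith

theorem θ_pos {l : ℕ} (hl : 2 ≤ l) : 0 < θ l := by
  have : (2 : ℝ) ≤ nl l := by exact_mod_cast two_le_nl hl
  unfold θ
  apply div_pos pi_pos
  linarith

theorem mul_θ_le_pi_div_two {l : ℕ} {k : ℝ} (hk : k ≤ nl l - 1) : k * θ l ≤ π / 2 := by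
  have hM : (0 : ℝ) ≤ nl l - 1 := by simp [nl]; positivity
  calc k * θ l = k / (nl l - 1) * (π / 2) := by rw [θ, mul_comm 2, ← div_div]; ring
    _ ≤ 1 * (π / 2) := by gcongr; exact div_le_one_of_le₀ hk hM
    _ = π / 2 := one_mul _

theorem δ_le_θ {l : ℕ} (hl : 2 ≤ l) : δ l ≤ θ l := by
  unfold δ θ
  rw [nl_sub_one]
  set A := log l
  set C : ℝ := (⌈A ^ 2⌉₊ : ℝ)
  have hA : 0 < A := log_pos (by exact_mod_cast hl)
  have hC : C * log 2 ^ 2 ≤ A ^ 2 := natCeil_log_sq_mul_log_two_sq_le hl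
  have hC₀ : 0 < C := Nat.cast_pos.mpr (Nat.ceil_pos.mpr (by positivity))
  have hα := α_mul_log_two_sq_ge
  have hL : 0 < log 2 ^ 2 := pow_pos (log_pos one_lt_two) 2
  have hα₀ : 0 < α := pos_of_mul_pos_left (by linarith) hL.le
  have hkey : 2 * C ≤ π * α * A ^ 2 := by
    refine le_of_mul_le_mul_right ?_ hL
    calc 2 * C * log 2 ^ 2 ≤ 2 * A ^ 2 := by linarith
      _ ≤ π * (α * log 2 ^ 2) * A ^ 2 := by gcongr; nlinarith [pi_gt_d2]
      _ = π * α * A ^ 2 * log 2 ^ 2 := by ring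
  rw [div_le_div_iff₀ (by positivity) (by positivity)]
  calc 1 * (2 * (l * C)) = l * (2 * C) := by ring
    _ ≤ l * (π * α * A ^ 2) := by gcongr
    _ = π * (α * l * A ^ 2) := by ring

theorem stmt12 (l : ℕ) (hl : 2 ≤ l) (j : ℕ) (hj : j ≤ nl l - 2) :
    0 ≤ δ l * cot (((j : ℝ) + 1) * θ l) ∧ δ l * cot (((j : ℝ) + 1) * θ l) ≤ 1 := by
  have hj' : (j : ℝ) + 1 ≤ nl l - 1 := by
    have := two_le_nl hl
    rw [le_sub_iff_add_le]
    exact_mod_cast (by omega : j + 1 + 1 ≤ nl l)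
  have hθ := θ_pos hl
  have hx₀ : 0 < ((j : ℝ) + 1) * θ l := by positivity
  have hx := mul_θ_le_pi_div_two hj'
  refine ⟨mul_nonneg (δ_nonneg l) (cot_nonneg hx₀ hx), mul_cot_le_one (δ_nonneg l) ?_ hx₀ hx⟩
  exact (δ_le_θ hl).trans (le_mul_of_one_le_left hθ.le (by linarith [j.cast_nonneg (α := ℝ)]))

end Stmt12
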